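/- arXiv:2308.09989 — 5 statements merged into one kernel-verified Lean document; each statement's English description precedes it below -/
import Mathlib

section
/- Let K/G be an immediate extension of valued abelian groups and let h ∈ K ∖ G. Then there exists a pseudo-Cauchy sequence in G which has h as a pseudo-limit and which has no pseudo-limit in G. -/
/-!
The values `v (h - g)`, `g ∈ G`, have no largest element: immediacy produces, for each
`g ∈ G`, some `g' ∈ G` approximating `h - g` strictly better than `v (h - g)`. Along a
well-ordered cofinal family of these values pick `a_γ ∈ G` with `v (h - a_γ) = γ`. Since
`γ ↦ v (h - a_γ)` is strictly increasing, the ultrametric inequality gives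
`v (a_γ - a_δ) = γ` for `γ < δ`, so `(a_γ)` is pseudo-Cauchy with pseudo-limit `h`. A
pseudo-limit `x ∈ G` would satisfy `v (h - x) ≥ γ` for all large `γ`, contradicting the
cofinality of the family, because `v (h - x)` is itself one of the values.
-/

universe u

/-- `v : G → Γ` is a valuation making the abelian group `G` a valued abelian group:
`Γ` is a linear order with greatest element `⊤` (denoted `∞` in the paper), `v` is
surjective, `v g = ⊤` iff `g = 0`, and `v (g - h) ≥ min (v g) (v h)`. -/
structure IsValuedGroup {G Γ : Type*} [AddCommGroup G] [LinearOrder Γ] [OrderTop Γ]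
    (v : G → Γ) : Prop where
  surjective : Function.Surjective v
  eq_top_iff : ∀ g : G, v g = ⊤ ↔ g = 0
  min_le_sub : ∀ g h : G, min (v g) (v h) ≤ v (g - h)

/-- A sequence `a` indexed by a linearly ordered set `I` is pseudo-Cauchy if eventually
`v (a i - a j) < v (a j - a k)` for `i < j < k`. -/
def IsPseudoCauchy {G Γ I : Type*} [AddCommGroup G] [LinearOrder Γ] [LinearOrder I]
    (v : G → Γ) (a : I → G) : Prop :=
  ∃ i₀ : I, ∀ i j k : I, i₀ ≤ i → i < j → j < k → v (a i - a j) < v (a j - a k)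

/-- `x` is a pseudo-limit of the sequence `a` if eventually
`v (a i - x) = v (a i - a j)` for `i < j`. -/
def IsPseudoLimit {G Γ I : Type*} [AddCommGroup G] [LinearOrder Γ] [LinearOrder I]
    (v : G → Γ) (a : I → G) (x : G) : Prop :=
  ∃ i₀ : I, ∀ i j : I, i₀ ≤ i → i < j → v (a i - x) = v (a i - a j)

/-- For subsets `G ⊆ K` of an ambient valued abelian group `(H, v)`, `K` is an immediate
extension of `G` (both regarded as valued groups via restriction of `v`): the nonzero
values of `K` and of `G` coincide, and for every value `γ` of `G` and every `k ∈ K` with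
`v k ≥ γ` there is `g ∈ G` with `v g ≥ γ` and `v (k - g) > γ` (i.e. the inclusion induces
isomorphisms of ribs). -/
def IsImmediateIn {H Γ : Type*} [AddCommGroup H] [LinearOrder Γ] [OrderTop Γ]
    (v : H → Γ) (G K : Set H) : Prop :=
  (∀ k ∈ K, k ≠ 0 → ∃ g ∈ G, g ≠ 0 ∧ v g = v k) ∧
  (∀ γ : Γ, (∃ g ∈ G, g ≠ 0 ∧ v g = γ) →
    ∀ k ∈ K, γ ≤ v k → ∃ g ∈ G, γ ≤ v g ∧ γ < v (k - g))

open Set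

theorem exists_isCofinal_wellFoundedLT (α : Type*) [LinearOrder α] :
    ∃ s : Set α, IsCofinal s ∧ WellFoundedLT s := by
  let r := @WellOrderingRel α
  refine ⟨{a | ∀ b, r b a → b < a}, isCofinal_setOfPred_imp_lt r, ⟨?_⟩⟩
  -- on the `r`-records, `<` is contained in `r`
  refine Subrelation.wf (fun {x y} hxy => ?_)
    (InvImage.wf Subtype.val WellOrderingRel.isWellOrder.wf)
  rcases trichotomous_of r x.1 y.1 with h | h | h
  · exact h
  · exact absurd (Subtype.ext h) hxy.ne
  · exact absurd (x.2 y h) (not_lt_of_gt hxy)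

theorem IsCofinal.noMaxOrder {α : Type*} [Preorder α] [NoMaxOrder α] {s : Set α}
    (hs : IsCofinal s) : NoMaxOrder s :=
  ⟨fun x =>
    let ⟨y, hy⟩ := exists_gt x.1
    let ⟨z, hz, hyz⟩ := hs y
    ⟨⟨z, hz⟩, hy.trans_le hyz⟩⟩

theorem IsImmediateIn.exists_lt_map_sub {H Γ : Type*} [AddCommGroup H] [LinearOrder Γ]
    [OrderTop Γ] {v : H → Γ} {G : AddSubgroup H} (himm : IsImmediateIn v (G : Set H) univ)
    {h : H} (hh : h ∉ G) {g : H} (hg : g ∈ G) : ∃ g' ∈ G, v (h - g) < v (h - g') := by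
  have hne : h - g ≠ 0 := sub_ne_zero.2 fun e => hh (e ▸ hg)
  obtain ⟨g₀, hg₀, hg₀ne, hg₀v⟩ := himm.1 (h - g) trivial hne
  obtain ⟨g', hg', -, hlt⟩ := himm.2 _ ⟨g₀, hg₀, hg₀ne, hg₀v⟩ (h - g) trivial le_rfl
  exact ⟨g + g', G.add_mem hg hg', by rwa [sub_add_eq_sub_sub]⟩

namespace IsValuedGroup

variable {G Γ : Type*} [AddCommGroup G] [LinearOrder Γ] [OrderTop Γ] {v : G → Γ}

theorem map_zero (hv : IsValuedGroup v) : v 0 = ⊤ :=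
  (hv.eq_top_iff 0).2 rfl

theorem map_neg (hv : IsValuedGroup v) (g : G) : v (-g) = v g := by
  have key : ∀ g : G, v g ≤ v (-g) := fun g => by
    simpa [hv.map_zero] using hv.min_le_sub 0 g
  exact le_antisymm (by simpa using key (-g)) (key g)

theorem map_sub_comm (hv : IsValuedGroup v) (g k : G) : v (g - k) = v (k - g) := by
  rw [← neg_sub, hv.map_neg]

theorem map_sub_eq_of_lt (hv : IsValuedGroup v) {g k : G} (hgk : v g < v k) :
    v (g - k) = v g := by
  refine le_antisymm ?_ (by simpa [min_eq_left hgk.le] using hv.min_le_sub g k)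
  have h := hv.min_le_sub (g - k) (-k)
  rw [sub_neg_eq_add, sub_add_cancel, hv.map_neg] at h
  exact (min_le_iff.1 h).resolve_right hgk.not_ge

variable {I : Type*} [LinearOrder I] {a : I → G} {x : G}

theorem map_sub_of_strictMono (hv : IsValuedGroup v) (ha : StrictMono fun i => v (x - a i))
    {i j : I} (hij : i < j) : v (a i - a j) = v (x - a i) := by
  rw [hv.map_sub_comm, ← hv.map_sub_eq_of_lt (ha hij), sub_sub_sub_cancel_left]

theorem isPseudoCauchy_of_strictMono (hv : IsValuedGroup v) [Nonempty I]
    (ha : StrictMono fun i => v (x - a i)) : IsPseudoCauchy v a :=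
  ⟨Classical.arbitrary I, fun _ _ _ _ hij hjk => by
    rw [hv.map_sub_of_strictMono ha hij, hv.map_sub_of_strictMono ha hjk]
    exact ha hij⟩

theorem isPseudoLimit_of_strictMono (hv : IsValuedGroup v) [Nonempty I]
    (ha : StrictMono fun i => v (x - a i)) : IsPseudoLimit v a x :=
  ⟨Classical.arbitrary I, fun _ _ _ hij => by
    rw [hv.map_sub_of_strictMono ha hij, hv.map_sub_comm]⟩

theorem map_sub_le_of_isPseudoLimit (hv : IsValuedGroup v) [NoMaxOrder I]
    (ha : StrictMono fun i => v (x - a i)) {y : G} (hy : IsPseudoLimit v a y) :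
    ∃ i₀, ∀ i, i₀ ≤ i → v (x - a i) ≤ v (x - y) := by
  obtain ⟨i₀, hi₀⟩ := hy
  refine ⟨i₀, fun i hi => ?_⟩
  obtain ⟨j, hij⟩ := exists_gt i
  have hay : v (y - a i) = v (x - a i) := by
    rw [hv.map_sub_comm, hi₀ i j hi hij, hv.map_sub_of_strictMono ha hij]
  calc v (x - a i) = min (v (x - a i)) (v (y - a i)) := by rw [hay, min_self]
    _ ≤ v (x - y) := by simpa using hv.min_le_sub (x - a i) (y - a i)

end IsValuedGroup

/-- Let `K/G` be an immediate extension of valued abelian groups and let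
`h ∈ K ∖ G`. Then there exists a pseudo-Cauchy sequence in `G` (indexed by a well-ordered
set with no greatest element) which has `h` as a pseudo-limit and which has no pseudo-limit
in `G`. -/
theorem exists_pseudoCauchy_of_immediate {K Γ : Type u} [AddCommGroup K] [LinearOrder Γ]
    [OrderTop Γ] (v : K → Γ) (hv : IsValuedGroup v) (G : AddSubgroup K)
    (himm : IsImmediateIn v (G : Set K) Set.univ) (h : K) (hh : h ∉ G) :
    ∃ (I : Type u) (_ : LinearOrder I) (_ : WellFoundedLT I) (_ : NoMaxOrder I)
      (_ : Nonempty I) (a : I → K),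
      (∀ i, a i ∈ G) ∧ IsPseudoCauchy v a ∧ IsPseudoLimit v a h ∧
      ∀ x ∈ G, ¬ IsPseudoLimit v a x := by
  let S : Set Γ := range fun g : G => v (h - g)
  have : Nonempty S := ⟨⟨_, 0, rfl⟩⟩
  have : NoMaxOrder S := ⟨fun γ => by
    obtain ⟨_, g, rfl⟩ := γ
    obtain ⟨g', hg', hlt⟩ := himm.exists_lt_map_sub hh g.2
    exact ⟨⟨_, ⟨g', hg'⟩, rfl⟩, hlt⟩⟩
  obtain ⟨C, hC, hwf⟩ := exists_isCofinal_wellFoundedLT S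
  have := hC.noMaxOrder
  have : Nonempty C := hC.nonempty.to_subtype
  have hval : ∀ c : C, ∃ g : G, v (h - g) = c.1.1 := fun c => c.1.2
  choose a ha using hval
  have hmono : StrictMono fun c => v (h - a c) := fun c d hcd => by
    simp only [ha]
    exact hcd
  refine ⟨C, inferInstance, hwf, inferInstance, inferInstance, fun c => a c, fun c => (a c).2,
    hv.isPseudoCauchy_of_strictMono hmono, hv.isPseudoLimit_of_strictMono hmono, ?_⟩
  intro y hy hlim
  obtain ⟨i₀, hi₀⟩ := hv.map_sub_le_of_isPseudoLimit hmono hlim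
  obtain ⟨c, hc, hle⟩ := hC ⟨v (h - y), ⟨y, hy⟩, rfl⟩
  obtain ⟨i, hi⟩ := exists_gt (max i₀ ⟨c, hc⟩)
  have hbound := hi₀ i ((le_max_left _ _).trans hi.le)
  rw [ha] at hbound
  exact not_le_of_gt (hle.trans_lt ((le_max_right _ _).trans_lt hi)) hbound
end

section
/- Let (G, v) be a ℤ-invariant valued abelian group, let p be a prime number, and let g ∈ G ∖ pG. Then for every g' in the subgroup generated by pG and g but not in pG (equivalently, every g' ∈ pG + i·g with 0 < i < p), one has Δ_p(g') = Δ_p(g), where Δ_p(x) := {v(x − p·y) : y ∈ G}. -/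
section

variable {G Γ : Type*} [AddCommGroup G] [LinearOrder Γ] [OrderTop Γ] {v : G → Γ}

theorem IsValuedGroup.map_neg_s3 (hv : IsValuedGroup v) (x : G) : v (-x) = v x := by
  have le_neg : ∀ y : G, v y ≤ v (-y) := fun y => by
    simpa [(hv.eq_top_iff 0).2 rfl] using hv.min_le_sub 0 y
  exact le_antisymm (by simpa using le_neg (-x)) (le_neg x)

theorem IsValuedGroup.map_zsmul (hv : IsValuedGroup v)
    (hinv : ∀ (g : G) (n : ℕ), 0 < n → v (n • g) = v g) {n : ℤ} (hn : n ≠ 0) (x : G) :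
    v (n • x) = v x := by
  obtain ⟨m, rfl | rfl⟩ := Int.eq_nat_or_neg n
  · rw [natCast_zsmul, hinv x m (by omega)]
  · rw [neg_smul, hv.map_neg_s3, natCast_zsmul, hinv x m (by omega)]

def deltaSet (v : G → Γ) (m : ℕ) (x : G) : Set Γ := {δ | ∃ y : G, v (x - m • y) = δ}

theorem IsValuedGroup.deltaSet_subset_zsmul_add_nsmul (hv : IsValuedGroup v)
    (hinv : ∀ (g : G) (n : ℕ), 0 < n → v (n • g) = v g) (m : ℕ) {a : ℤ} (ha : a ≠ 0)
    (x z : G) : deltaSet v m x ⊆ deltaSet v m (a • x + m • z) := by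
  rintro _ ⟨y, rfl⟩
  refine ⟨a • y + z, ?_⟩
  rw [← hv.map_zsmul hinv ha (x - m • y)]
  congr 1
  module

end

theorem exists_eq_nsmul_add_zsmul_of_mem_closure {G : Type*} [AddCommGroup G] {m : ℕ}
    {g x : G} (hx : x ∈ AddSubgroup.closure ({x : G | ∃ y : G, x = m • y} ∪ {g})) :
    ∃ (y : G) (k : ℤ), x = m • y + k • g := by
  induction hx using AddSubgroup.closure_induction with
  | mem x hx =>
    rcases hx with ⟨y, rfl⟩ | rfl
    exacts [⟨y, 0, by simp⟩, ⟨0, 1, by simp⟩]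
  | zero => exact ⟨0, 0, by simp⟩
  | add _ _ _ _ h₁ h₂ =>
    obtain ⟨y₁, k₁, rfl⟩ := h₁
    obtain ⟨y₂, k₂, rfl⟩ := h₂
    exact ⟨y₁ + y₂, k₁ + k₂, by module⟩
  | neg _ _ h =>
    obtain ⟨y, k, rfl⟩ := h
    exact ⟨-y, -k, by module⟩

theorem delta_p_eq_of_mem_closure_general {G Γ : Type*} [AddCommGroup G] [LinearOrder Γ] [OrderTop Γ]
    (v : G → Γ) (hv : IsValuedGroup v)
    (hinv : ∀ (g : G) (n : ℕ), 0 < n → v (n • g) = v g)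
    (p : ℕ) (hp : p.Prime) (g : G)
    (g' : G) (hg' : g' ∈ AddSubgroup.closure ({x : G | ∃ y : G, x = p • y} ∪ {g}))
    (hg'p : ∀ y : G, g' ≠ p • y) :
    {δ : Γ | ∃ y : G, v (g' - p • y) = δ} = {δ : Γ | ∃ y : G, v (g - p • y) = δ} := by
  obtain ⟨y₀, k, rfl⟩ := exists_eq_nsmul_add_zsmul_of_mem_closure hg'
  have hp' : Prime (p : ℤ) := Nat.prime_iff_prime_int.mp hp
  have hk : ¬ (p : ℤ) ∣ k := fun ⟨j, hj⟩ => hg'p (y₀ + j • g) (by rw [hj]; module)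
  obtain ⟨b, a, hab⟩ := hp'.coprime_iff_not_dvd.mpr hk
  have ha : a ≠ 0 := by
    rintro rfl
    exact hp'.not_dvd_one ⟨b, by linarith⟩
  have hk0 : k ≠ 0 := fun h => hk (h ▸ dvd_zero _)
  have hg_eq : g = a • (p • y₀ + k • g) + p • (b • g - a • y₀) := by
    linear_combination (norm := module) -hab • g
  show deltaSet v p (p • y₀ + k • g) = deltaSet v p g
  apply subset_antisymm
  · simpa only [← hg_eq] using
      hv.deltaSet_subset_zsmul_add_nsmul hinv p ha (p • y₀ + k • g) (b • g - a • y₀)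
  · rw [add_comm]
    exact hv.deltaSet_subset_zsmul_add_nsmul hinv p hk0 g y₀

/-- Let `(G, v)` be a ℤ-invariant valued abelian group, `p` a prime, and
`g ∈ G ∖ pG`. Then for every `g'` in the subgroup generated by `pG` and `g` which is not in
`pG`, one has `Δ_p(g') = Δ_p(g)`, where `Δ_p(x) = {v (x - p • y) : y ∈ G}`. -/
theorem delta_p_eq_of_mem_closure {G Γ : Type*} [AddCommGroup G] [LinearOrder Γ] [OrderTop Γ]
    (v : G → Γ) (hv : IsValuedGroup v)
    (hinv : ∀ (g : G) (n : ℕ), 0 < n → v (n • g) = v g)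
    (p : ℕ) (hp : p.Prime) (g : G) (hg : ∀ y : G, g ≠ p • y)
    (g' : G) (hg' : g' ∈ AddSubgroup.closure ({x : G | ∃ y : G, x = p • y} ∪ {g}))
    (hg'p : ∀ y : G, g' ≠ p • y) :
    {δ : Γ | ∃ y : G, v (g' - p • y) = δ} = {δ : Γ | ∃ y : G, v (g - p • y) = δ} :=
  delta_p_eq_of_mem_closure_general v hv hinv p hp g g' hg' hg'p
end

section
/- Let Γ be a linear order and R an abelian group. The additive group of Hahn series HahnSeries Γ R (functions Γ → R with partially well-ordered support), equipped with the valuation sending f to orderTop f ∈ WithTop Γ (the least element of the support of f, and ⊤ for f = 0), is pseudo-complete: every pseudo-Cauchy sequence in HahnSeries Γ R admits a pseudo-limit in HahnSeries Γ R. -/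
/-!
Each `a i` agrees with every later term on the initial segment of `Γ` lying strictly below all
the `orderTop (a i - a j)` with `j > i`. Gluing these segments gives a Hahn series `x`, whose
support is well-founded because below any point of it `x` agrees with a single `a i`. For
`i₀ ≤ i < j < k` the pseudo-Cauchy inequality puts `orderTop (a i - a j)` into the segment of
`a j`, so `orderTop (a i - a j) < orderTop (a j - x)`, and the ultrametric equality turns this
into `orderTop (a i - x) = orderTop (a i - a j)`.
-/

theorem isPseudoLimit_of_lt_val_sub {G Γ I : Type*} [AddCommGroup G] [LinearOrder Γ]
    [LinearOrder I] {v : G → Γ} (hv : ∀ f g, v f < v g → v (f + g) = v f)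
    {a : I → G} {x : G} {i₀ : I}
    (h : ∀ i j, i₀ ≤ i → i < j → v (a i - a j) < v (a j - x)) :
    IsPseudoLimit v a x :=
  ⟨i₀, fun i j hi hij => by rw [← sub_add_sub_cancel (a i) (a j) x, hv _ _ (h i j hi hij)]⟩

theorem Set.isWF_of_forall_isWF_inter_Iic {α : Type*} [Preorder α] {s : Set α}
    (h : ∀ g ∈ s, (s ∩ Iic g).IsWF) : s.IsWF :=
  isWF_iff_no_descending_seq.2 fun f hf hfs => isWF_iff_no_descending_seq.1 (h (f 0) (hfs 0)) f hf
    fun n => ⟨hfs n, hf.antitone n.zero_le⟩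

namespace HahnSeries

variable {Γ R : Type*} [LinearOrder Γ]

theorem coe_lt_orderTop_of_coeff_eq_zero [Zero R] {x : HahnSeries Γ R} {g : Γ}
    (h : ∀ g' ≤ g, x.coeff g' = 0) : (g : WithTop Γ) < x.orderTop := by
  by_contra! hle
  obtain ⟨g', hg'⟩ := WithTop.ne_top_iff_exists.1 (hle.trans_lt (WithTop.coe_lt_top g)).ne
  exact coeff_orderTop_ne hg'.symm (h g' (WithTop.coe_le_coe.1 (hg' ▸ hle)))

theorem coeff_eq_of_coe_lt_orderTop_sub [AddGroup R] {x y : HahnSeries Γ R} {g : Γ}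
    (h : (g : WithTop Γ) < (x - y).orderTop) : x.coeff g = y.coeff g :=
  sub_eq_zero.1 <| by rw [← coeff_sub]; exact coeff_eq_zero_of_lt_orderTop h

theorem exists_coeff_eq_of_isLowerSet [Zero R] {ι : Type*} (b : ι → HahnSeries Γ R)
    (S : ι → Set Γ) (hS : ∀ i, IsLowerSet (S i))
    (hb : ∀ i j, ∀ g ∈ S i, g ∈ S j → (b i).coeff g = (b j).coeff g) :
    ∃ x : HahnSeries Γ R, ∀ i, ∀ g ∈ S i, x.coeff g = (b i).coeff g := by
  classical
  let c : Γ → R := fun g => if hg : ∃ i, g ∈ S i then (b hg.choose).coeff g else 0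
  have hc : ∀ i, ∀ g ∈ S i, c g = (b i).coeff g := fun i g hg => by
    have hex : ∃ i, g ∈ S i := ⟨i, hg⟩
    simp only [c, dif_pos hex]
    exact hb _ i g hex.choose_spec hg
  have hsupp : (Function.support c).IsWF := by
    refine Set.isWF_of_forall_isWF_inter_Iic fun g hg => ?_
    obtain ⟨i, hi⟩ : ∃ i, g ∈ S i := by
      by_contra hex
      exact hg (dif_neg hex)
    refine (b i).isWF_support.mono fun g' ⟨hg', hle⟩ => ?_
    rwa [Function.mem_support, hc i g' (hS i hle hi)] at hg'
  exact ⟨⟨c, hsupp.isPWO⟩, hc⟩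

end HahnSeries

theorem hahnSeries_pseudoComplete_general {Γ R : Type*} [LinearOrder Γ] [AddCommGroup R]
    (I : Type*) [LinearOrder I] [NoMaxOrder I]
    (a : I → HahnSeries Γ R)
    (hpc : IsPseudoCauchy (fun f : HahnSeries Γ R => f.orderTop) a) :
    ∃ x : HahnSeries Γ R, IsPseudoLimit (fun f : HahnSeries Γ R => f.orderTop) a x := by
  obtain ⟨i₀, hpc⟩ := hpc
  simp only at hpc
  let S : I → Set Γ := fun i => {g | ∀ j, i < j → (g : WithTop Γ) < (a i - a j).orderTop}
  have hS : ∀ i, IsLowerSet (S i) := fun i g g' hle hg j hij =>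
    (WithTop.coe_le_coe.2 hle).trans_lt (hg j hij)
  have hcompat : ∀ i j, ∀ g ∈ S i, g ∈ S j → (a i).coeff g = (a j).coeff g := by
    intro i j g hi hj
    rcases lt_trichotomy i j with hij | rfl | hji
    · exact HahnSeries.coeff_eq_of_coe_lt_orderTop_sub (hi j hij)
    · rfl
    · exact (HahnSeries.coeff_eq_of_coe_lt_orderTop_sub (hj i hji)).symm
  obtain ⟨x, hx⟩ := HahnSeries.exists_coeff_eq_of_isLowerSet a S hS hcompat
  refine ⟨x, isPseudoLimit_of_lt_val_sub (i₀ := i₀)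
    (fun _ _ => HahnSeries.orderTop_add_eq_left) fun i j hi hij => ?_⟩
  obtain ⟨k, hjk⟩ := exists_gt j
  obtain ⟨γ, hγ⟩ := WithTop.ne_top_iff_exists.1 (hpc i j k hi hij hjk).ne_top
  rw [← hγ]
  refine HahnSeries.coe_lt_orderTop_of_coeff_eq_zero fun g hg => ?_
  have hgS : g ∈ S j := fun l hjl =>
    (WithTop.coe_le_coe.2 hg).trans_lt (hγ ▸ hpc i j l hi hij hjl)
  rw [HahnSeries.coeff_sub, hx j g hgS, sub_self]

/-- Let `Γ` be a linear order and `R` an abelian group. The additive group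
of Hahn series `HahnSeries Γ R`, equipped with the valuation `f ↦ orderTop f ∈ WithTop Γ`,
is pseudo-complete: every pseudo-Cauchy sequence (indexed by a well-ordered set with no
greatest element) admits a pseudo-limit in `HahnSeries Γ R`. -/
theorem hahnSeries_pseudoComplete {Γ R : Type*} [LinearOrder Γ] [AddCommGroup R]
    (I : Type*) [LinearOrder I] [WellFoundedLT I] [NoMaxOrder I] [Nonempty I]
    (a : I → HahnSeries Γ R)
    (hpc : IsPseudoCauchy (fun f : HahnSeries Γ R => f.orderTop) a) :
    ∃ x : HahnSeries Γ R, IsPseudoLimit (fun f : HahnSeries Γ R => f.orderTop) a x :=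
  hahnSeries_pseudoComplete_general I a hpc
end

section
/- Let (G, v) be a ℤ-invariant valued abelian group satisfying property (M), let m > 1, and let γ ∈ Γ ∖ {∞}. Then the following are equivalent: (a) γ belongs to the m-spine, i.e. there exists g ∈ G ∖ mG with V_g^m = V_γ := {z ∈ G : v(z) > γ}; (b) the rib R_γ = C_γ/V_γ is not divisible by m, i.e. there exists c ∈ G with v(c) ≥ γ such that for every c' ∈ G with v(c') ≥ γ one has c − m·c' ∉ V_γ (equivalently v(c − m·c') = γ), where C_γ = {x : v(x) ≥ γ}. -/
universe u

/-- For a valued abelian group `(G, v)`, `m ∈ ℕ` and `a ∈ G`, the set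
`V_a^m = {x ∈ G : v (a + m • g) < v x for all g ∈ G}`, i.e. the largest convex subgroup
of `G` not meeting `a + mG` (and `∅` if `a ∈ mG`). -/
def Vm {G Γ : Type*} [AddCommGroup G] [LinearOrder Γ] (v : G → Γ) (m : ℕ) (a : G) :
    Set G :=
  {x : G | ∀ g : G, v (a + m • g) < v x}

/-!
`V_a^m` consists of the elements lying strictly above every value taken on the coset `a + mG`.
So `V_g^m = V_γ` forces every value on `g + mG` to be `≤ γ`, and, `γ` being a value
(surjectivity), some element `c` of the coset has `v c = γ`; as `c - m c'` stays in the coset,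
the class of `c` in `R_γ` is not divisible by `m`.
Conversely, for such a `c` property (M) gives `y ∈ c + mG` with `V_c^m = V_{v y}`.
Then `γ ≤ v c ≤ v y` because `c` itself lies outside `V_c^m`, while `v y > γ` would give
`c - y = m w` with `v w ≥ γ` by ℤ-invariance and `c - m w = y ∈ V_γ`. Hence `V_c^m = V_γ`, and `c ∉ mG` since `V_c^m` contains `0`.
-/

section ValuedGroup

variable {G Γ : Type*} [AddCommGroup G] [LinearOrder Γ] {v : G → Γ} {m : ℕ}

theorem add_nsmul_notMem_Vm (a h : G) : a + m • h ∉ Vm v m a :=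
  fun hx => lt_irrefl _ (hx h)

theorem apply_add_nsmul_le_of_Vm_eq {a : G} {γ : Γ} (hV : Vm v m a = {z | γ < v z}) (h : G) :
    v (a + m • h) ≤ γ := by
  have hh : a + m • h ∉ Vm v m a := add_nsmul_notMem_Vm a h
  rw [hV] at hh
  exact not_lt.mp hh

variable [OrderTop Γ]

theorem Vm_eq_empty_of_eq_nsmul (hv : IsValuedGroup v) {a u : G} (hau : a = m • u) :
    Vm v m a = ∅ := by
  refine Set.eq_empty_of_forall_notMem fun x hx => ?_
  have hxu := hx (-u)
  rw [hau, smul_neg, add_neg_cancel, (hv.eq_top_iff 0).mpr rfl] at hxu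
  exact not_top_lt hxu

theorem ne_nsmul_of_Vm_eq (hv : IsValuedGroup v) {a : G} {γ : Γ} (hγ : γ ≠ ⊤)
    (hV : Vm v m a = {z | γ < v z}) (u : G) : a ≠ m • u := by
  intro hau
  have h0 : (0 : G) ∈ Vm v m a := by
    simp [hV, (hv.eq_top_iff 0).mpr rfl, lt_top_iff_ne_top, hγ]
  rwa [Vm_eq_empty_of_eq_nsmul hv hau] at h0

theorem exists_le_apply_add_nsmul_of_Vm_eq (hv : IsValuedGroup v) {a : G} {γ : Γ}
    (hV : Vm v m a = {z | γ < v z}) : ∃ h, γ ≤ v (a + m • h) := by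
  obtain ⟨z, rfl⟩ := hv.surjective γ
  have hz : z ∉ Vm v m a := by simp [hV]
  simpa [Vm] using hz

theorem rib_not_divisible_of_Vm_eq (hv : IsValuedGroup v) {g : G} {γ : Γ}
    (hV : Vm v m g = {z | γ < v z}) :
    ∃ c : G, γ ≤ v c ∧ ∀ c' : G, γ ≤ v c' → ¬ γ < v (c - m • c') := by
  obtain ⟨h, hh⟩ := exists_le_apply_add_nsmul_of_Vm_eq hv hV
  refine ⟨g + m • h, hh, fun c' _ => not_lt.mpr ?_⟩
  rw [add_sub_assoc, ← smul_sub]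
  exact apply_add_nsmul_le_of_Vm_eq hV (h - c')

theorem Vm_eq_of_rib_not_divisible (hv : IsValuedGroup v)
    (hinv : ∀ (g : G) (n : ℕ), 0 < n → v (n • g) = v g) (hm : 0 < m) {c y w : G} {γ : Γ}
    (hc : γ ≤ v c) (hcd : ∀ c' : G, γ ≤ v c' → ¬ γ < v (c - m • c'))
    (hw : c - y = m • w) (hV : Vm v m c = {z | v y < v z}) : Vm v m c = {z | γ < v z} := by
  have hcy : v c ≤ v y := by simpa using apply_add_nsmul_le_of_Vm_eq hV 0
  have hyγ : v y ≤ γ := by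
    by_contra! hγy
    refine hcd w ?_ (by rwa [show c - m • w = y by rw [← hw]; abel])
    calc γ ≤ min (v c) (v y) := le_min hc hγy.le
      _ ≤ v (c - y) := hv.min_le_sub c y
      _ = v w := by rw [hw, hinv w m hm]
  rw [hV, le_antisymm hyγ (hc.trans hcy)]

end ValuedGroup

/-- Let `(G, v)` be a ℤ-invariant valued abelian group satisfying property
(M), let `m > 1`, and let `γ ∈ Γ ∖ {∞}`. Then the following are equivalent:
(a) `γ` belongs to the `m`-spine, i.e. there exists `g ∈ G ∖ mG` with
`V_g^m = V_γ = {z : v z > γ}`;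
(b) the rib `R_γ = C_γ/V_γ` is not divisible by `m`, i.e. there exists `c` with `v c ≥ γ`
such that for every `c'` with `v c' ≥ γ` one has `c - m • c' ∉ V_γ`. -/
theorem mem_mSpine_iff_rib_not_divisible {G Γ : Type*} [AddCommGroup G] [LinearOrder Γ]
    [OrderTop Γ] (v : G → Γ) (hv : IsValuedGroup v)
    (hinv : ∀ (g : G) (n : ℕ), 0 < n → v (n • g) = v g)
    (hM : ∀ m : ℕ, 0 < m → ∀ x : G, ∃ y : G,
      (∃ w : G, x - y = m • w) ∧ Vm v m x = {z : G | v y < v z})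
    (m : ℕ) (hm : 1 < m) (γ : Γ) (hγ : γ ≠ ⊤) :
    (∃ g : G, (∀ y : G, g ≠ m • y) ∧ Vm v m g = {z : G | γ < v z}) ↔
      (∃ c : G, γ ≤ v c ∧ ∀ c' : G, γ ≤ v c' → ¬ γ < v (c - m • c')) := by
  constructor
  · rintro ⟨g, -, hV⟩
    exact rib_not_divisible_of_Vm_eq hv hV
  · rintro ⟨c, hc, hcd⟩
    obtain ⟨y, ⟨w, hw⟩, hV⟩ := hM m (by omega) c
    have hVγ := Vm_eq_of_rib_not_divisible hv hinv (by omega) hc hcd hw hV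
    exact ⟨c, ne_nsmul_of_Vm_eq hv hγ hVγ, hVγ⟩
end

section
/- Let (G, v) be a valued abelian group, m ∈ ℕ, and a ∈ G ∖ mG. Then the set V_a^m := {x ∈ G : v(a + m·g) < v(x) for all g ∈ G} is a convex subgroup of G (i.e. a subgroup such that x ∈ V_a^m and v(y) ≥ v(x) imply y ∈ V_a^m), it satisfies a ∉ V_a^m + mG, and every convex subgroup H of G with a ∉ H + mG is contained in V_a^m; that is, V_a^m is the largest convex subgroup H of G with a ∉ H + mG. -/
universe u

/-!
If a convex `H` contained some `x` with `v x ≤ v (a + m • g)`, it would contain `a + m • g`,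
and then `a = (a + m • g) + m • (-g) ∈ H + mG`; this is why `Vm v m a` is the largest.
-/

section Vm

variable {G Γ : Type*} [AddCommGroup G] [LinearOrder Γ] {v : G → Γ} {m : ℕ} {a : G}

theorem zero_mem_Vm [OrderTop Γ] (hv : IsValuedGroup v) (ha : ∀ y : G, a ≠ m • y) :
    (0 : G) ∈ Vm v m a := by
  intro g
  rw [(hv.eq_top_iff 0).mpr rfl, lt_top_iff_ne_top]
  intro hg
  apply ha (-g)
  rw [smul_neg, eq_neg_iff_add_eq_zero]
  exact (hv.eq_top_iff _).mp hg

theorem sub_mem_Vm [OrderTop Γ] (hv : IsValuedGroup v) {x y : G} (hx : x ∈ Vm v m a)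
    (hy : y ∈ Vm v m a) : x - y ∈ Vm v m a :=
  fun g => (lt_min (hx g) (hy g)).trans_le (hv.min_le_sub x y)

theorem mem_Vm_of_le {x y : G} (hx : x ∈ Vm v m a) (hxy : v x ≤ v y) : y ∈ Vm v m a :=
  fun g => (hx g).trans_le hxy

theorem ne_add_nsmul_of_mem_Vm {h : G} (hh : h ∈ Vm v m a) (y : G) : a ≠ h + m • y := by
  intro hay
  have := hh (-y)
  rw [smul_neg, hay, add_neg_cancel_right] at this
  exact lt_irrefl _ this

theorem subset_Vm {H : Set G} (hconv : ∀ x ∈ H, ∀ y : G, v x ≤ v y → y ∈ H)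
    (hne : ∀ h ∈ H, ∀ y : G, a ≠ h + m • y) : H ⊆ Vm v m a := by
  intro x hx g
  by_contra! hle
  exact hne _ (hconv x hx _ hle) (-g) (by rw [smul_neg, add_neg_cancel_right])

end Vm

/-- Let `(G, v)` be a valued abelian group, `m ∈ ℕ`, and `a ∈ G ∖ mG`.
Then `V_a^m = {x : v (a + m • g) < v x for all g}` is a convex subgroup of `G` (it contains
`0`, is closed under subtraction, and `x ∈ V_a^m` together with `v y ≥ v x` implies
`y ∈ V_a^m`), it satisfies `a ∉ V_a^m + mG`, and every convex subgroup `H` of `G` with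
`a ∉ H + mG` is contained in `V_a^m`; that is, `V_a^m` is the largest convex subgroup `H`
of `G` with `a ∉ H + mG`. -/
theorem Vm_largest_convex_subgroup {G Γ : Type*} [AddCommGroup G] [LinearOrder Γ]
    [OrderTop Γ] (v : G → Γ) (hv : IsValuedGroup v) (m : ℕ) (a : G)
    (ha : ∀ y : G, a ≠ m • y) :
    (0 : G) ∈ Vm v m a ∧
    (∀ x ∈ Vm v m a, ∀ y ∈ Vm v m a, x - y ∈ Vm v m a) ∧
    (∀ x ∈ Vm v m a, ∀ y : G, v x ≤ v y → y ∈ Vm v m a) ∧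
    (∀ h ∈ Vm v m a, ∀ y : G, a ≠ h + m • y) ∧
    (∀ H : AddSubgroup G, (∀ x ∈ H, ∀ y : G, v x ≤ v y → y ∈ H) →
      (∀ h ∈ H, ∀ y : G, a ≠ h + m • y) → (H : Set G) ⊆ Vm v m a) :=
  ⟨zero_mem_Vm hv ha, fun _ hx _ hy => sub_mem_Vm hv hx hy, fun _ hx _ => mem_Vm_of_le hx,
    fun _ hh => ne_add_nsmul_of_mem_Vm hh, fun _ hconv hne => subset_Vm hconv hne⟩
end
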